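/- arXiv:2112.09162 — 3 statements merged into one kernel-verified Lean document; each statement's English description precedes it below -/
import Mathlib

section
/- Let c₀ > 0 and let ν be a probability density on [-1,1] with ν(λ) ≥ c₀ for all λ ∈ [-1,1]. Let x₁, x₂, … be any sequence of real numbers in [-1,1] and define the mixture-method wealth K_n = ∫_{-1}^{1} ∏_{t=1}^{n} (1 + λ x_t) ν(λ) dλ. Then: (i) for every λ_max ∈ (0,1) and every Δλ with 0 < Δλ < 1 − λ_max, K_n ≥ exp( n · max_{λ ∈ [−λ_max, λ_max]} (1/n) Σ_{t=1}^n log(1 + λ x_t) − nΔλ/(1 − λ_max − Δλ) − log(1/(c₀ Δλ)) ); and (ii) for every n ≥ 4, K_n ≥ exp( (n/8) ((1/n) Σ_{t=1}^n x_t)² − 4 − log(n/c₀) ). -/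
/-!
If `|l₀| ≤ m` and `|λ - l₀| ≤ Δ`, each factor satisfies
`log (1 + λ x_t) ≥ log (1 + l₀ x_t) - Δ / (1 - m - Δ)`, so on the window `[l₀, l₀ + Δ]`, where
also `ν ≥ c₀`, the integrand is at least `c₀ ∏ (1 + l₀ x_t) e^{-nΔ/(1-m-Δ)}`. Integrating over the
window alone gives `K_n ≥ c₀ Δ ∏ (1 + l₀ x_t) e^{-nΔ/(1-m-Δ)}`; part (i) is this bound at every
`l₀ ∈ [-λ_max, λ_max]`. For part (ii) take `l₀ = μ/4` with `μ` the mean payoff, `Δ = 1/n`,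
`m = 1/4`, and use `log (1 + u) ≥ u - 2u²` for `u ≥ -1/2`.
-/

open MeasureTheory Finset

lemma Real.sub_two_mul_sq_le_log_one_add {u : ℝ} (hu : -(1 / 2) ≤ u) :
    u - 2 * u ^ 2 ≤ Real.log (1 + u) := by
  have hpos : 0 < 1 + u := by linarith
  have hinv : (1 + u)⁻¹ ≤ 1 - u + 2 * u ^ 2 := by
    rw [inv_eq_one_div, div_le_iff₀ hpos]
    nlinarith [mul_nonneg (sq_nonneg u) (by linarith : (0 : ℝ) ≤ 1 + 2 * u)]
  linarith [Real.one_sub_inv_le_log_of_pos hpos]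

lemma abs_mul_le_one_of_abs_le_one {a b : ℝ} (ha : |a| ≤ 1) (hb : |b| ≤ 1) : |a * b| ≤ 1 := by
  rw [abs_mul]
  exact mul_le_one₀ ha (abs_nonneg b) hb

lemma sub_sub_le_one_add_mul {l₀ l m Δ y : ℝ} (hl₀ : |l₀| ≤ m) (hl : |l - l₀| ≤ Δ)
    (hy : |y| ≤ 1) : 1 - m - Δ ≤ 1 + l * y := by
  have hly : |l * y| ≤ |l| := by
    rw [abs_mul]
    exact mul_le_of_le_one_right (abs_nonneg l) hy
  linarith [neg_abs_le (l * y), abs_sub_abs_le_abs_sub l l₀]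

lemma log_one_add_mul_sub_le {l₀ l m Δ y : ℝ} (hl₀ : |l₀| ≤ m) (hl : |l - l₀| ≤ Δ)
    (hmΔ : m + Δ < 1) (hy : |y| ≤ 1) :
    Real.log (1 + l₀ * y) - Δ / (1 - m - Δ) ≤ Real.log (1 + l * y) := by
  have hΔ : 0 ≤ Δ := (abs_nonneg _).trans hl
  have hgap : 0 < 1 - m - Δ := by linarith
  have hlower := sub_sub_le_one_add_mul hl₀ hl hy
  have hpos₀ : 0 < 1 + l₀ * y := by
    linarith [sub_sub_le_one_add_mul hl₀ (by simp : |l₀ - l₀| ≤ 0) hy]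
  have hpos : 0 < 1 + l * y := hgap.trans_le hlower
  have hdiff : (l₀ - l) * y ≤ Δ := by
    calc (l₀ - l) * y ≤ |(l₀ - l) * y| := le_abs_self _
      _ = |l - l₀| * |y| := by rw [abs_mul, abs_sub_comm]
      _ ≤ Δ * 1 := by gcongr
      _ = Δ := mul_one _
  have hratio : (1 + l₀ * y) / (1 + l * y) - 1 ≤ Δ / (1 - m - Δ) := by
    rw [div_sub_one hpos.ne', div_le_div_iff₀ hpos hgap]
    nlinarith [mul_le_mul_of_nonneg_right hdiff hgap.le, mul_le_mul_of_nonneg_left hlower hΔ]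
  have hlog := Real.log_le_sub_one_of_pos (div_pos hpos₀ hpos)
  rw [Real.log_div hpos₀.ne' hpos.ne'] at hlog
  linarith

lemma exp_sum_log_sub_le_prod_one_add_mul {ι : Type*} (s : Finset ι) {y : ι → ℝ}
    (hy : ∀ i ∈ s, |y i| ≤ 1) {l₀ l m Δ : ℝ} (hl₀ : |l₀| ≤ m) (hl : |l - l₀| ≤ Δ)
    (hmΔ : m + Δ < 1) :
    Real.exp (∑ i ∈ s, Real.log (1 + l₀ * y i) - s.card * (Δ / (1 - m - Δ)))
      ≤ ∏ i ∈ s, (1 + l * y i) := by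
  have hpos : ∀ i ∈ s, 0 < 1 + l * y i := fun i hi =>
    (by linarith : (0 : ℝ) < 1 - m - Δ).trans_le (sub_sub_le_one_add_mul hl₀ hl (hy i hi))
  rw [← prod_congr rfl fun i hi => Real.exp_log (hpos i hi), ← Real.exp_sum,
    Real.exp_le_exp, ← nsmul_eq_mul, ← sum_const, ← sum_sub_distrib]
  exact sum_le_sum fun i hi => log_one_add_mul_sub_le hl₀ hl hmΔ (hy i hi)

lemma abs_sum_le_card_of_abs_le_one {ι : Type*} (s : Finset ι) {y : ι → ℝ}
    (hy : ∀ i ∈ s, |y i| ≤ 1) : |∑ i ∈ s, y i| ≤ s.card := by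
  simpa using (abs_sum_le_sum_abs y s).trans (sum_le_card_nsmul s _ 1 hy)

lemma mul_sum_sub_le_sum_log_one_add_mul {ι : Type*} (s : Finset ι) {y : ι → ℝ}
    (hy : ∀ i ∈ s, |y i| ≤ 1) {a : ℝ} (ha : |a| ≤ 1 / 2) :
    a * ∑ i ∈ s, y i - 2 * s.card * a ^ 2 ≤ ∑ i ∈ s, Real.log (1 + a * y i) := by
  have hconst : 2 * (s.card : ℝ) * a ^ 2 = ∑ _i ∈ s, 2 * a ^ 2 := by
    rw [sum_const, nsmul_eq_mul]
    ring
  rw [mul_sum, hconst, ← sum_sub_distrib]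
  refine sum_le_sum fun i hi => ?_
  have hay : |a * y i| ≤ |a| := by
    rw [abs_mul]
    exact mul_le_of_le_one_right (abs_nonneg a) (hy i hi)
  have hsq : (a * y i) ^ 2 ≤ a ^ 2 := by
    simpa only [sq_abs] using pow_le_pow_left₀ (abs_nonneg _) hay 2
  have hlog := Real.sub_two_mul_sq_le_log_one_add (u := a * y i)
    (by linarith [neg_abs_le (a * y i)])
  linarith

noncomputable def mixtureWealth (ν : ℝ → ℝ) (x : ℕ → ℝ) (n : ℕ) : ℝ :=
  ∫ l in Set.Icc (-1 : ℝ) 1, (∏ t ∈ Icc 1 n, (1 + l * x t)) * ν l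

section MixtureWealth

variable {ν : ℝ → ℝ} {x : ℕ → ℝ} {c₀ : ℝ}

lemma integrableOn_prod_one_add_mul_mul (hν : IntegrableOn ν (Set.Icc (-1) 1))
    (hx : ∀ t, |x t| ≤ 1) (n : ℕ) :
    IntegrableOn (fun l => (∏ t ∈ Icc 1 n, (1 + l * x t)) * ν l) (Set.Icc (-1) 1) := by
  refine hν.bdd_mul (c := 2 ^ n) (by fun_prop) ?_
  refine (ae_restrict_iff' measurableSet_Icc).2 (Filter.Eventually.of_forall fun l hl => ?_)
  have hl : |l| ≤ 1 := abs_le.2 hl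
  rw [Real.norm_eq_abs, abs_prod]
  calc ∏ t ∈ Icc 1 n, |1 + l * x t| ≤ ∏ _t ∈ Icc 1 n, (2 : ℝ) :=
        prod_le_prod (fun _ _ => abs_nonneg _) fun t _ =>
          (abs_add_le _ _).trans <| by
            rw [abs_one]
            linarith [abs_mul_le_one_of_abs_le_one hl (hx t)]
    _ = 2 ^ n := by simp

lemma mul_exp_le_mixtureWealth (hc₀ : 0 ≤ c₀) (hν : IntegrableOn ν (Set.Icc (-1) 1))
    (hν_lb : ∀ l ∈ Set.Icc (-1 : ℝ) 1, c₀ ≤ ν l) (hx : ∀ t, |x t| ≤ 1) (n : ℕ)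
    {l₀ m Δ : ℝ} (hl₀ : |l₀| ≤ m) (hΔ : 0 ≤ Δ) (hmΔ : m + Δ < 1) :
    c₀ * Δ * Real.exp (∑ t ∈ Icc 1 n, Real.log (1 + l₀ * x t) - n * Δ / (1 - m - Δ))
      ≤ mixtureWealth ν x n := by
  set E := Real.exp (∑ t ∈ Icc 1 n, Real.log (1 + l₀ * x t) - n * Δ / (1 - m - Δ))
  have hwindow : Set.Icc l₀ (l₀ + Δ) ⊆ Set.Icc (-1) 1 :=
    Set.Icc_subset_Icc (by linarith [neg_abs_le l₀]) (by linarith [le_abs_self l₀])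
  have hint := integrableOn_prod_one_add_mul_mul hν hx n
  have hbound : ∀ l ∈ Set.Icc l₀ (l₀ + Δ), c₀ * E ≤ (∏ t ∈ Icc 1 n, (1 + l * x t)) * ν l := by
    intro l hl
    have hE : E ≤ ∏ t ∈ Icc 1 n, (1 + l * x t) := by
      have := exp_sum_log_sub_le_prod_one_add_mul (Icc 1 n) (fun t _ => hx t) hl₀ (l := l)
        (abs_sub_le_iff.2 ⟨by linarith [hl.2], by linarith [hl.1]⟩) hmΔ
      rwa [Nat.card_Icc, Nat.add_sub_cancel, ← mul_div_assoc] at this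
    rw [mul_comm c₀]
    exact mul_le_mul hE (hν_lb l (hwindow hl)) hc₀ ((Real.exp_pos _).le.trans hE)
  have hnonneg : 0 ≤ᵐ[volume.restrict (Set.Icc (-1 : ℝ) 1)]
      fun l => (∏ t ∈ Icc 1 n, (1 + l * x t)) * ν l := by
    refine (ae_restrict_iff' measurableSet_Icc).2 (Filter.Eventually.of_forall fun l hl => ?_)
    refine mul_nonneg (prod_nonneg fun t _ => ?_) (hc₀.trans (hν_lb l hl))
    linarith [neg_abs_le (l * x t), abs_mul_le_one_of_abs_le_one (abs_le.2 hl) (hx t)]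
  calc c₀ * Δ * E = c₀ * E * volume.real (Set.Icc l₀ (l₀ + Δ)) := by
        rw [Real.volume_real_Icc_of_le (by linarith)]
        ring
    _ ≤ ∫ l in Set.Icc l₀ (l₀ + Δ), (∏ t ∈ Icc 1 n, (1 + l * x t)) * ν l :=
        setIntegral_ge_of_const_le_real measurableSet_Icc (by simp) hbound (hint.mono_set hwindow)
    _ ≤ mixtureWealth ν x n := setIntegral_mono_set hint hnonneg hwindow.eventuallyLE

lemma mixtureWealth_pos (hc₀ : 0 < c₀) (hν : IntegrableOn ν (Set.Icc (-1) 1))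
    (hν_lb : ∀ l ∈ Set.Icc (-1 : ℝ) 1, c₀ ≤ ν l) (hx : ∀ t, |x t| ≤ 1) (n : ℕ) :
    0 < mixtureWealth ν x n :=
  (mul_exp_le_mixtureWealth hc₀.le hν hν_lb hx n (l₀ := 0) (m := 0) (Δ := 1 / 2) (by simp)
    (by norm_num) (by norm_num)).trans_lt' (by positivity)

lemma log_mul_add_le_log_mixtureWealth (hc₀ : 0 < c₀)
    (hν : IntegrableOn ν (Set.Icc (-1) 1)) (hν_lb : ∀ l ∈ Set.Icc (-1 : ℝ) 1, c₀ ≤ ν l)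
    (hx : ∀ t, |x t| ≤ 1) (n : ℕ) {l₀ m Δ : ℝ} (hl₀ : |l₀| ≤ m) (hΔ : 0 < Δ)
    (hmΔ : m + Δ < 1) :
    Real.log (c₀ * Δ) + (∑ t ∈ Icc 1 n, Real.log (1 + l₀ * x t) - n * Δ / (1 - m - Δ))
      ≤ Real.log (mixtureWealth ν x n) := by
  rw [← Real.log_exp (_ - _), ← Real.log_mul (by positivity) (Real.exp_pos _).ne']
  exact Real.log_le_log (by positivity)
    (mul_exp_le_mixtureWealth hc₀.le hν hν_lb hx n hl₀ hΔ.le hmΔ)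

theorem exp_iSup_sub_le_mixtureWealth (hc₀ : 0 < c₀)
    (hν : IntegrableOn ν (Set.Icc (-1) 1)) (hν_lb : ∀ l ∈ Set.Icc (-1 : ℝ) 1, c₀ ≤ ν l)
    (hx : ∀ t, |x t| ≤ 1) {lmax Δ : ℝ} (hlmax : 0 < lmax) (hΔ : 0 < Δ) (hΔlmax : Δ < 1 - lmax)
    (n : ℕ) :
    Real.exp ((n : ℝ) * (⨆ l : Set.Icc (-lmax) lmax,
          (1 / (n : ℝ)) * ∑ t ∈ Icc 1 n, Real.log (1 + (l : ℝ) * x t))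
        - n * Δ / (1 - lmax - Δ) - Real.log (1 / (c₀ * Δ)))
      ≤ mixtureWealth ν x n := by
  have : Nonempty (Set.Icc (-lmax) lmax) := (Set.nonempty_Icc.2 (by linarith)).to_subtype
  -- `1 / 0 = 0` in Lean, but at `n = 0` the sum is empty anyway
  have hcancel (S : ℝ) (hS : n = 0 → S = 0) : (n : ℝ) * (1 / n * S) = S := by
    rcases n.eq_zero_or_pos with rfl | hn
    · simp [hS rfl]
    · field_simp
  rw [← Real.le_log_iff_exp_le (mixtureWealth_pos hc₀ hν hν_lb hx n),
    Real.mul_iSup_of_nonneg n.cast_nonneg, one_div (c₀ * Δ), Real.log_inv]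
  have hsup : (⨆ l : Set.Icc (-lmax) lmax,
      (n : ℝ) * (1 / n * ∑ t ∈ Icc 1 n, Real.log (1 + l * x t)))
      ≤ Real.log (mixtureWealth ν x n) - Real.log (c₀ * Δ) + n * Δ / (1 - lmax - Δ) := by
    refine ciSup_le fun l => ?_
    rw [hcancel _ fun hn => by simp [hn]]
    linarith [log_mul_add_le_log_mixtureWealth hc₀ hν hν_lb hx n (abs_le.2 l.2) hΔ (by linarith)]
  linarith

theorem exp_sq_mean_sub_le_mixtureWealth (hc₀ : 0 < c₀)
    (hν : IntegrableOn ν (Set.Icc (-1) 1)) (hν_lb : ∀ l ∈ Set.Icc (-1 : ℝ) 1, c₀ ≤ ν l)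
    (hx : ∀ t, |x t| ≤ 1) {n : ℕ} (hn : 4 ≤ n) :
    Real.exp ((n : ℝ) / 8 * (1 / (n : ℝ) * ∑ t ∈ Icc 1 n, x t) ^ 2 - 4 - Real.log (n / c₀))
      ≤ mixtureWealth ν x n := by
  set μ := 1 / (n : ℝ) * ∑ t ∈ Icc 1 n, x t
  have hn4 : (4 : ℝ) ≤ n := by exact_mod_cast hn
  have hsum : ∑ t ∈ Icc 1 n, x t = n * μ := by
    simp only [μ]
    field_simp
  have hμ : |μ| ≤ 1 := by
    have := abs_sum_le_card_of_abs_le_one (Icc 1 n) fun t _ => hx t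
    rw [Nat.card_Icc, Nat.add_sub_cancel, hsum, abs_mul, Nat.abs_cast] at this
    exact le_of_mul_le_mul_left (by simpa using this) (by positivity)
  have hinv : 1 / (n : ℝ) ≤ 1 / 4 := one_div_le_one_div_of_le (by norm_num) hn4
  have hμ4 : |μ / 4| ≤ 1 / 4 := by
    rw [abs_div, abs_of_pos (by norm_num : (0 : ℝ) < 4)]
    linarith
  have hgain := mul_sum_sub_le_sum_log_one_add_mul (Icc 1 n) (fun t _ => hx t) (a := μ / 4)
    (by linarith)
  rw [Nat.card_Icc, Nat.add_sub_cancel, hsum] at hgain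
  have hK := log_mul_add_le_log_mixtureWealth hc₀ hν hν_lb hx n hμ4 (Δ := 1 / n)
    (by positivity) (by linarith)
  have hpenalty : (n : ℝ) * (1 / n) / (1 - 1 / 4 - 1 / n) ≤ 2 := by
    rw [mul_one_div_cancel (by positivity), div_le_iff₀ (by linarith)]
    linarith
  have hlog : Real.log (c₀ * (1 / n)) = -Real.log (n / c₀) := by
    rw [mul_one_div, ← Real.log_inv, inv_div]
  rw [← Real.le_log_iff_exp_le (mixtureWealth_pos hc₀ hν hν_lb hx n)]
  linarith

end MixtureWealth

/-- lower bounds on the mixture-method wealth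
`K n = ∫_{-1}^1 ∏_{t=1}^n (1 + λ x_t) ν(λ) dλ`. -/
theorem stmt_0
    (c₀ : ℝ) (hc₀ : 0 < c₀)
    (ν : ℝ → ℝ)
    (hν_lb : ∀ l ∈ Set.Icc (-1 : ℝ) 1, c₀ ≤ ν l)
    (hν_prob : ∫ l in Set.Icc (-1 : ℝ) 1, ν l = 1)
    (x : ℕ → ℝ) (hx : ∀ t, x t ∈ Set.Icc (-1 : ℝ) 1)
    (K : ℕ → ℝ)
    (hK : ∀ n, K n =
      ∫ l in Set.Icc (-1 : ℝ) 1, (∏ t ∈ Finset.Icc 1 n, (1 + l * x t)) * ν l) :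
    -- (i)
    (∀ lmax ∈ Set.Ioo (0 : ℝ) 1, ∀ Δ : ℝ, 0 < Δ → Δ < 1 - lmax → ∀ n : ℕ,
      K n ≥ Real.exp
        ((n : ℝ) * (⨆ l : Set.Icc (-lmax) lmax,
            (1 / (n : ℝ)) * ∑ t ∈ Finset.Icc 1 n, Real.log (1 + (l : ℝ) * x t))
          - (n : ℝ) * Δ / (1 - lmax - Δ)
          - Real.log (1 / (c₀ * Δ)))) ∧
    -- (ii)
    (∀ n : ℕ, 4 ≤ n →
      K n ≥ Real.exp
        (((n : ℝ) / 8) * ((1 / (n : ℝ)) * ∑ t ∈ Finset.Icc 1 n, x t) ^ 2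
          - 4 - Real.log ((n : ℝ) / c₀))) := by
  have hν : IntegrableOn ν (Set.Icc (-1) 1) :=
    Integrable.of_integral_ne_zero (by rw [hν_prob]; exact one_ne_zero)
  have hx' : ∀ t, |x t| ≤ 1 := fun t => abs_le.2 (hx t)
  have hK' : K = mixtureWealth ν x := funext hK
  subst hK'
  exact ⟨fun lmax hlmax Δ hΔ hΔlmax n =>
      exp_iSup_sub_le_mixtureWealth hc₀ hν hν_lb hx' hlmax.1 hΔ hΔlmax n,
    fun n hn => exp_sq_mean_sub_le_mixtureWealth hc₀ hν hν_lb hx' hn⟩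
end

section
/- Let P be a probability measure on ℝ that is absolutely continuous with respect to Lebesgue measure (e.g. the uniform distribution on [0,1]) and let Q be any probability measure on ℝ. Then sup_{ε>0} inf{ KL(P', Q) : P' a probability measure on ℝ with d_KS(P', P) ≤ ε } = KL(P, Q), where d_KS is the Kolmogorov–Smirnov distance and KL the Kullback–Leibler divergence. -/
open MeasureTheory
open scoped ENNReal

/-- The Kullback–Leibler divergence `KL(μ, ν) = ∫ log(dμ/dν) dμ` when `μ ≪ ν`
(and the log-likelihood ratio is integrable), and `+∞` otherwise. -/
noncomputable def klDiv {𝒳 : Type*} [MeasurableSpace 𝒳] (μ ν : Measure 𝒳) : ℝ≥0∞ :=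
  open Classical in
  if μ ≪ ν ∧ Integrable (llr μ ν) μ then ENNReal.ofReal (∫ x, llr μ ν x ∂μ) else ⊤

/-- The Kolmogorov–Smirnov distance between two measures on `ℝ`, i.e. the sup
distance between their cdfs. -/
noncomputable def dKS (μ ν : Measure ℝ) : ℝ :=
  ⨆ x : ℝ, |(μ (Set.Iic x)).toReal - (ν (Set.Iic x)).toReal|

/-!
Only `klDiv P Q ≤ sup_ε inf …` needs an argument. Since `klFun` is the convex conjugate of
`y ↦ exp y - 1`, `KL(P, Q) = sup_g (∫ g dP - ∫ exp g dQ + 1)` over bounded measurable `g`,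
and the supremum is approached along truncations of `log (dP/dQ)` by Fatou's lemma. Such a `g`
can be replaced, at small cost, by a step function `h = ∑ cᵢ 1_(aᵢ, aᵢ₊₁]`: first approximate
`g` in `L¹(P + Q)` by a continuous compactly supported function, then that one uniformly. Now
`∫ h dP'` only sees the cdf of `P'` at the points `aᵢ`, so it moves by at most
`2 ∑ |cᵢ| · d_KS(P', P)`, and `KL(P', Q) ≥ ∫ h dP' - ∫ exp h dQ + 1` stays above any given
value below `KL(P, Q)` once `d_KS(P', P)` is small.
-/

open Real Set Filter Topology

lemma klDiv_eq_informationTheory_klDiv {α : Type*} [MeasurableSpace α] (μ ν : Measure α)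
    [IsProbabilityMeasure μ] [IsProbabilityMeasure ν] :
    klDiv μ ν = InformationTheory.klDiv μ ν := by
  by_cases h : μ ≪ ν ∧ Integrable (llr μ ν) μ
  · simp [klDiv, h, InformationTheory.klDiv_of_ac_of_integrable h.1 h.2]
  · rw [klDiv, if_neg h, eq_comm, InformationTheory.klDiv_eq_top_iff]
    exact fun hac hint ↦ h ⟨hac, hint⟩

/-- The hypothesis says that `y` lies between `0` and `log t`. -/
lemma mul_sub_exp_add_one_nonneg {t y : ℝ} (h : 0 ≤ y * (t - exp y)) :
    0 ≤ t * y - exp y + 1 := by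
  have := mul_le_mul_of_nonneg_right (add_one_le_exp (-y)) (exp_pos y).le
  rw [← exp_add, neg_add_cancel, exp_zero] at this
  nlinarith

lemma mul_sub_exp_add_one_le_klFun {t : ℝ} (ht : 0 ≤ t) (y : ℝ) :
    t * y - exp y + 1 ≤ InformationTheory.klFun t := by
  rw [InformationTheory.klFun]
  rcases ht.eq_or_lt with rfl | ht
  · simpa using (exp_pos y).le
  · have := add_one_le_exp (y - log t)
    rw [exp_sub, exp_log ht, le_div_iff₀ ht] at this
    nlinarith

lemma exp_sub_exp_le_exp_mul_abs {u v B : ℝ} (hv : v ≤ B) : exp v - exp u ≤ exp B * |u - v| := by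
  rcases le_total v u with h | h
  · linarith [exp_le_exp.2 h, mul_nonneg (exp_pos B).le (abs_nonneg (u - v))]
  · have := mul_le_mul_of_nonneg_left (add_one_le_exp (u - v)) (exp_pos v).le
    rw [← exp_add, add_sub_cancel] at this
    rw [abs_of_nonpos (sub_nonpos.2 h)]
    nlinarith [exp_le_exp.2 hv]

lemma abs_max_min_sub_le {u v B : ℝ} (hv : |v| ≤ B) : |max (min u B) (-B) - v| ≤ |u - v| := by
  obtain ⟨h1, h2⟩ := abs_le.1 hv
  calc _ = |max (min u B) (-B) - max (min v B) (-B)| := by rw [min_eq_left h2, max_eq_left h1]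
    _ ≤ |min u B - min v B| := abs_max_sub_max_le_abs _ _ _
    _ ≤ |u - v| := by simpa using abs_min_sub_min_le_max u B v B

/-- The truncation `max (min (log t) n) (-n)` of `log t`, with the value `-n` at `t = 0`. -/
noncomputable def truncLog (n : ℕ) (t : ℝ) : ℝ := min (log (max t (exp (-n)))) n

lemma measurable_truncLog (n : ℕ) : Measurable (truncLog n) :=
  (measurable_id.max measurable_const).log.min measurable_const

lemma abs_truncLog_le (n : ℕ) (t : ℝ) : |truncLog n t| ≤ n := by
  refine abs_le.2 ⟨le_min ?_ (by linarith [n.cast_nonneg (α := ℝ)]), min_le_right _ _⟩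
  calc -(n : ℝ) = log (exp (-n)) := (log_exp _).symm
    _ ≤ _ := log_le_log (exp_pos _) (le_max_right _ _)

lemma truncLog_of_le {n : ℕ} {t : ℝ} (ht : exp (-n) ≤ t) (hn : log t ≤ n) :
    truncLog n t = log t := by
  rw [truncLog, max_eq_left ht, min_eq_left hn]

lemma truncLog_zero_right (n : ℕ) : truncLog n 0 = -n := by
  rw [truncLog, max_eq_right (exp_pos _).le, log_exp, min_eq_left (by simp)]

lemma truncLog_mul_sub_exp_nonneg (n : ℕ) (t : ℝ) :
    0 ≤ truncLog n t * (t - exp (truncLog n t)) := by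
  rcases le_or_gt (exp (-n)) t with h | h
  · have ht : 0 < t := (exp_pos _).trans_le h
    rcases le_total (log t) n with h' | h'
    · simp [truncLog_of_le h h', exp_log ht]
    · rw [truncLog, max_eq_left h, min_eq_right h']
      refine mul_nonneg n.cast_nonneg (sub_nonneg.2 ?_)
      simpa [exp_log ht] using exp_le_exp.2 h'
  · rw [truncLog, max_eq_right h.le, log_exp, min_eq_left (by simp)]
    exact mul_nonneg_of_nonpos_of_nonpos (by simp) (by linarith)

lemma tendsto_mul_truncLog_sub_exp {t : ℝ} (ht : 0 ≤ t) :
    Tendsto (fun n ↦ t * truncLog n t - exp (truncLog n t) + 1) atTop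
      (𝓝 (InformationTheory.klFun t)) := by
  rcases ht.eq_or_lt with rfl | ht
  · simp only [truncLog_zero_right, zero_mul, zero_sub, InformationTheory.klFun_zero]
    simpa using ((tendsto_exp_neg_atTop_nhds_zero.comp
      tendsto_natCast_atTop_atTop).neg.add_const 1)
  · refine tendsto_const_nhds.congr' ?_
    filter_upwards [eventually_ge_atTop ⌈|log t|⌉₊] with n hn
    have hlog : |log t| ≤ n := (Nat.le_ceil _).trans (by exact_mod_cast hn)
    rw [truncLog_of_le _ (le_of_abs_le hlog), exp_log ht, InformationTheory.klFun]
    · ring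
    · rw [← exp_log ht]; exact exp_le_exp.2 (by linarith [neg_abs_le (log t)])

section KLDual

variable {α : Type*} {mα : MeasurableSpace α} {μ ν : Measure α}

lemma integrable_of_abs_le [IsFiniteMeasure μ] {g : α → ℝ} (hg : Measurable g) {B : ℝ}
    (hB : ∀ x, |g x| ≤ B) : Integrable g μ :=
  .of_bound hg.aestronglyMeasurable B (ae_of_all _ hB)

lemma integrable_exp_of_abs_le [IsFiniteMeasure μ] {g : α → ℝ} (hg : Measurable g) {B : ℝ}
    (hB : ∀ x, |g x| ≤ B) : Integrable (fun x ↦ exp (g x)) μ :=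
  integrable_of_abs_le hg.exp (B := exp B) fun x ↦ by
    rw [abs_of_pos (exp_pos _)]; exact exp_le_exp.2 (le_of_abs_le (hB x))

noncomputable def klDual (μ ν : Measure α) (g : α → ℝ) : ℝ :=
  ∫ x, g x ∂μ - ∫ x, exp (g x) ∂ν + ν.real univ

lemma exists_lt_klDual_of_not_ac [IsFiniteMeasure μ] (h : ¬ μ ≪ ν) (M : ℝ) :
    ∃ g : α → ℝ, ∃ B, Measurable g ∧ (∀ x, |g x| ≤ B) ∧ M < klDual μ ν g := by
  obtain ⟨s, hs, hνs, hμs⟩ : ∃ s, MeasurableSet s ∧ ν s = 0 ∧ μ s ≠ 0 := by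
    by_contra! h'
    exact h (Measure.AbsolutelyContinuous.mk h')
  have hp : 0 < μ.real s := ENNReal.toReal_pos hμs (measure_ne_top μ s)
  set c := (|M| + 1) / μ.real s
  have hc : 0 ≤ c := by positivity
  refine ⟨s.indicator fun _ ↦ c, c, measurable_const.indicator hs, fun x ↦ ?_, ?_⟩
  · by_cases hx : x ∈ s <;> simp [hx, abs_of_nonneg hc, hc]
  have hexp : ∫ x, exp (s.indicator (fun _ ↦ c) x) ∂ν = ν.real univ := by
    rw [integral_congr_ae (g := fun _ ↦ 1)]
    · simp
    · filter_upwards [measure_eq_zero_iff_ae_notMem.1 hνs] with x hx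
      simp [hx]
  rw [klDual, hexp, integral_indicator_const _ hs, smul_eq_mul, sub_add_cancel,
    mul_div_cancel₀ _ hp.ne']
  linarith [le_abs_self M]

variable [IsFiniteMeasure μ] [IsFiniteMeasure ν] {g : α → ℝ} {B : ℝ}

lemma integrable_rnDeriv_mul_sub_exp_add_one (hac : μ ≪ ν) (hg : Measurable g)
    (hB : ∀ x, |g x| ≤ B) :
    Integrable (fun x ↦ (μ.rnDeriv ν x).toReal * g x - exp (g x) + 1) ν :=
  (((integrable_toReal_rnDeriv_mul_iff hac).2 (integrable_of_abs_le hg hB)).sub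
    (integrable_exp_of_abs_le hg hB)).add (integrable_const 1)

lemma klDual_eq_integral (hac : μ ≪ ν) (hg : Measurable g) (hB : ∀ x, |g x| ≤ B) :
    klDual μ ν g = ∫ x, ((μ.rnDeriv ν x).toReal * g x - exp (g x) + 1) ∂ν := by
  have hmul := (integrable_toReal_rnDeriv_mul_iff hac).2 (integrable_of_abs_le hg hB)
  have hexp := integrable_exp_of_abs_le (μ := ν) hg hB
  rw [integral_add (by exact hmul.sub hexp) (integrable_const 1), integral_sub hmul hexp,
    integral_toReal_rnDeriv_mul hac, klDual]
  simp

lemma ofReal_klDual_le_klDiv (hg : Measurable g) (hB : ∀ x, |g x| ≤ B) :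
    ENNReal.ofReal (klDual μ ν g) ≤ InformationTheory.klDiv μ ν := by
  by_cases hKL : InformationTheory.klDiv μ ν = ∞
  · simp [hKL]
  obtain ⟨hac, hllr⟩ := InformationTheory.klDiv_ne_top_iff.1 hKL
  rw [InformationTheory.klDiv_eq_integral_klFun, if_pos ⟨hac, hllr⟩, klDual_eq_integral hac hg hB]
  refine ENNReal.ofReal_le_ofReal (integral_mono (integrable_rnDeriv_mul_sub_exp_add_one hac hg hB)
    ((InformationTheory.integrable_klFun_rnDeriv_iff hac).2 hllr) fun x ↦ ?_)
  exact mul_sub_exp_add_one_le_klFun ENNReal.toReal_nonneg _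

lemma exists_lt_ofReal_klDual_truncLog (hac : μ ≪ ν) {m : ℝ≥0∞}
    (hm : m < InformationTheory.klDiv μ ν) :
    ∃ n : ℕ, m < ENNReal.ofReal (klDual μ ν fun x ↦ truncLog n (μ.rnDeriv ν x).toReal) := by
  set t : α → ℝ := fun x ↦ (μ.rnDeriv ν x).toReal
  have ht : Measurable t := (μ.measurable_rnDeriv ν).ennreal_toReal
  set F : ℕ → α → ℝ := fun n x ↦ t x * truncLog n (t x) - exp (truncLog n (t x)) + 1
  have hF : ∀ n, ENNReal.ofReal (klDual μ ν fun x ↦ truncLog n (t x)) =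
      ∫⁻ x, ENNReal.ofReal (F n x) ∂ν := fun n ↦ by
    have hg : Measurable fun x ↦ truncLog n (t x) := (measurable_truncLog n).comp ht
    rw [klDual_eq_integral hac hg fun x ↦ abs_truncLog_le n _,
      ofReal_integral_eq_lintegral_ofReal]
    · exact integrable_rnDeriv_mul_sub_exp_add_one hac hg fun x ↦ abs_truncLog_le n _
    · exact ae_of_all _ fun x ↦ mul_sub_exp_add_one_nonneg (truncLog_mul_sub_exp_nonneg n _)
  have hfatou : InformationTheory.klDiv μ ν ≤ liminf (fun n ↦ ∫⁻ x, ENNReal.ofReal (F n x) ∂ν)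
      atTop := by
    rw [InformationTheory.klDiv_eq_lintegral_klFun_of_ac hac]
    calc ∫⁻ x, ENNReal.ofReal (InformationTheory.klFun (t x)) ∂ν
        = ∫⁻ x, liminf (fun n ↦ ENNReal.ofReal (F n x)) atTop ∂ν :=
          lintegral_congr fun x ↦ (((ENNReal.continuous_ofReal.tendsto _).comp
            (tendsto_mul_truncLog_sub_exp ENNReal.toReal_nonneg)).liminf_eq).symm
      _ ≤ _ := lintegral_liminf_le fun n ↦ by
          have := (measurable_truncLog n).comp ht
          fun_prop
  obtain ⟨n, hn⟩ := (eventually_lt_of_lt_liminf (hm.trans_le hfatou)).exists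
  exact ⟨n, hn.trans_eq (hF n).symm⟩

lemma exists_lt_klDual_of_lt_klDiv {M : ℝ} (hM : ENNReal.ofReal M < InformationTheory.klDiv μ ν) :
    ∃ g : α → ℝ, ∃ B, Measurable g ∧ (∀ x, |g x| ≤ B) ∧ M < klDual μ ν g := by
  by_cases hac : μ ≪ ν
  · obtain ⟨n, hn⟩ := exists_lt_ofReal_klDual_truncLog hac hM
    exact ⟨_, n, (measurable_truncLog n).comp (μ.measurable_rnDeriv ν).ennreal_toReal,
      fun x ↦ abs_truncLog_le n _, (ENNReal.ofReal_lt_ofReal_iff'.1 hn).1⟩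
  · exact exists_lt_klDual_of_not_ac hac M

lemma klDual_le_klDual_add {h : α → ℝ} (hg : Measurable g) (hgB : ∀ x, |g x| ≤ B)
    (hh : Measurable h) (hhB : ∀ x, |h x| ≤ B) :
    klDual μ ν g ≤ klDual μ ν h + ∫ x, |g x - h x| ∂μ + exp B * ∫ x, |g x - h x| ∂ν := by
  have hμ : ∫ x, g x ∂μ - ∫ x, h x ∂μ ≤ ∫ x, |g x - h x| ∂μ := by
    rw [← integral_sub (integrable_of_abs_le hg hgB) (integrable_of_abs_le hh hhB)]
    exact integral_mono ((integrable_of_abs_le hg hgB).sub (integrable_of_abs_le hh hhB))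
      ((integrable_of_abs_le hg hgB).sub (integrable_of_abs_le hh hhB)).abs fun x ↦ le_abs_self _
  have hν : ∫ x, exp (h x) ∂ν - ∫ x, exp (g x) ∂ν ≤ exp B * ∫ x, |g x - h x| ∂ν := by
    rw [← integral_sub (integrable_exp_of_abs_le hh hhB) (integrable_exp_of_abs_le hg hgB),
      ← integral_const_mul]
    exact integral_mono ((integrable_exp_of_abs_le hh hhB).sub (integrable_exp_of_abs_le hg hgB))
      (((integrable_of_abs_le hg hgB).sub (integrable_of_abs_le hh hhB)).abs.const_mul _)
      fun x ↦ exp_sub_exp_le_exp_mul_abs (le_of_abs_le (hhB x))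
  simp only [klDual]
  linarith

end KLDual

lemma abs_measureReal_Iic_sub_le_dKS (μ ν : Measure ℝ) [IsFiniteMeasure μ] [IsFiniteMeasure ν]
    (x : ℝ) : |μ.real (Iic x) - ν.real (Iic x)| ≤ dKS μ ν := by
  refine le_ciSup (f := fun x ↦ |μ.real (Iic x) - ν.real (Iic x)|)
    ⟨μ.real univ + ν.real univ, ?_⟩ x
  rintro _ ⟨y, rfl⟩
  refine (abs_sub _ _).trans (add_le_add ?_ ?_) <;>
    rw [abs_of_nonneg measureReal_nonneg] <;> exact measureReal_mono (subset_univ _)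

lemma dKS_self (μ : Measure ℝ) : dKS μ μ = 0 := by
  simp [dKS]

noncomputable def stepFun (a c : ℕ → ℝ) (n : ℕ) (x : ℝ) : ℝ :=
  ∑ i ∈ Finset.range n, (Ioc (a i) (a (i + 1))).indicator (fun _ ↦ c i) x

section StepFun

variable {a c : ℕ → ℝ} {n : ℕ}

lemma measurable_stepFun : Measurable (stepFun a c n) :=
  Finset.measurable_sum _ fun _ _ ↦ measurable_const.indicator measurableSet_Ioc

lemma abs_stepFun_le (x : ℝ) : |stepFun a c n x| ≤ ∑ i ∈ Finset.range n, |c i| := by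
  refine (Finset.abs_sum_le_sum_abs _ _).trans (Finset.sum_le_sum fun i _ ↦ ?_)
  by_cases hx : x ∈ Ioc (a i) (a (i + 1)) <;> simp [hx]

lemma stepFun_eq_of_mem (ha : Monotone a) {i : ℕ} (hi : i < n) {x : ℝ}
    (hx : x ∈ Ioc (a i) (a (i + 1))) : stepFun a c n x = c i := by
  rw [stepFun, Finset.sum_eq_single_of_mem i (Finset.mem_range.2 hi), indicator_of_mem hx]
  exact fun j _ hji ↦ indicator_of_notMem
    (fun hx' ↦ disjoint_left.1 (ha.pairwise_disjoint_on_Ioc_succ hji) hx' hx) _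

lemma stepFun_eq_zero (ha : Monotone a) {x : ℝ} (hx : x ∉ Ioc (a 0) (a n)) :
    stepFun a c n x = 0 :=
  Finset.sum_eq_zero fun i hi ↦ indicator_of_notMem (fun hx' ↦ hx
    (Ioc_subset_Ioc (ha (Nat.zero_le i)) (ha (Finset.mem_range.1 hi)) hx')) _

lemma integral_stepFun (ha : Monotone a) (μ : Measure ℝ) [IsFiniteMeasure μ] :
    ∫ x, stepFun a c n x ∂μ =
      ∑ i ∈ Finset.range n, c i * (μ.real (Iic (a (i + 1))) - μ.real (Iic (a i))) := by
  unfold stepFun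
  rw [integral_finsetSum _ fun i _ ↦
    (integrable_const (c i)).indicator measurableSet_Ioc]
  refine Finset.sum_congr rfl fun i _ ↦ ?_
  rw [integral_indicator_const _ measurableSet_Ioc, smul_eq_mul, mul_comm, ← Iic_sdiff_Iic,
    measureReal_sdiff (Iic_subset_Iic.2 (ha (Nat.le_succ i))) measurableSet_Iic]

lemma abs_integral_stepFun_sub_le (ha : Monotone a) (μ ν : Measure ℝ) [IsFiniteMeasure μ]
    [IsFiniteMeasure ν] :
    |∫ x, stepFun a c n x ∂μ - ∫ x, stepFun a c n x ∂ν| ≤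
      2 * (∑ i ∈ Finset.range n, |c i|) * dKS μ ν := by
  rw [integral_stepFun ha, integral_stepFun ha, ← Finset.sum_sub_distrib, mul_comm 2,
    mul_assoc, Finset.sum_mul]
  refine (Finset.abs_sum_le_sum_abs _ _).trans (Finset.sum_le_sum fun i _ ↦ ?_)
  rw [← mul_sub, abs_mul]
  refine mul_le_mul_of_nonneg_left ?_ (abs_nonneg _)
  calc _ = |(μ.real (Iic (a (i + 1))) - ν.real (Iic (a (i + 1)))) -
        (μ.real (Iic (a i)) - ν.real (Iic (a i)))| := by ring_nf
    _ ≤ _ := (abs_sub _ _).trans (by linarith [abs_measureReal_Iic_sub_le_dKS μ ν (a i),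
        abs_measureReal_Iic_sub_le_dKS μ ν (a (i + 1))])

end StepFun

lemma exists_stepFun_abs_sub_le {f : ℝ → ℝ} (hf : Continuous f) (hsupp : HasCompactSupport f)
    {δ : ℝ} (hδ : 0 < δ) :
    ∃ (a c : ℕ → ℝ) (n : ℕ), Monotone a ∧ ∀ x, |stepFun a c n x - f x| ≤ δ := by
  obtain ⟨C, hC⟩ := isBounded_iff_forall_norm_le.1 hsupp.isCompact.isBounded
  set R := |C| + 1
  have hR : 0 < R := by positivity
  have hf0 : ∀ x, x ∉ Ioc (-R) R → f x = 0 := by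
    refine fun x hx ↦ image_eq_zero_of_notMem_tsupport fun hx' ↦ hx ?_
    have := abs_le.1 (Real.norm_eq_abs x ▸ hC x hx')
    exact ⟨by linarith [le_abs_self C], by linarith [le_abs_self C]⟩
  obtain ⟨η, hη, hfη⟩ :=
    Metric.uniformContinuous_iff.1 (hsupp.uniformContinuous_of_continuous hf) δ hδ
  obtain ⟨N, hN⟩ := exists_nat_gt (2 * R / η)
  have hN0 : (0 : ℝ) < N := (by positivity : 0 < 2 * R / η).trans hN
  set w := 2 * R / N
  have hw : 0 < w := by positivity
  have hwη : w < η := by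
    rw [div_lt_iff₀ hη] at hN
    rw [div_lt_iff₀ hN0]; linarith
  set a : ℕ → ℝ := fun i ↦ -R + i * w
  have ha : Monotone a := fun i j hij ↦ by
    simp only [a]; gcongr
  refine ⟨a, fun i ↦ f (a (i + 1)), N, ha, fun x ↦ ?_⟩
  by_cases hx : x ∈ Ioc (a 0) (a N)
  · obtain ⟨i, hi, hxi⟩ := mem_iUnion₂.1 (Ioc_subset_biUnion_Ioc N a hx)
    rw [stepFun_eq_of_mem ha (Finset.mem_range.1 hi) hxi, ← Real.dist_eq]
    refine (hfη ?_).le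
    rw [Real.dist_eq, abs_of_nonneg (by linarith [hxi.2])]
    have : a (i + 1) - a i = w := by simp only [a]; push_cast; ring
    linarith [hxi.1]
  · have haN : a N = R := by simp only [a, w]; field_simp; ring
    rw [stepFun_eq_zero ha hx, hf0 x (by simpa [a, haN] using hx)]
    simpa using hδ.le

lemma exists_stepFun_integral_abs_sub_le (μ : Measure ℝ) [IsFiniteMeasure μ] {g : ℝ → ℝ}
    (hg : Measurable g) {B : ℝ} (hB : ∀ x, |g x| ≤ B) {δ : ℝ} (hδ : 0 < δ) :
    ∃ (a c : ℕ → ℝ) (n : ℕ), Monotone a ∧ (∀ x, |stepFun a c n x| ≤ B + 1) ∧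
      ∫ x, |g x - stepFun a c n x| ∂μ ≤ δ := by
  have hB0 : 0 ≤ B := (abs_nonneg _).trans (hB 0)
  obtain ⟨f, hfsupp, hfg, hf, hfμ⟩ :=
    (integrable_of_abs_le hg hB (μ := μ)).exists_hasCompactSupport_integral_sub_le (half_pos hδ)
  -- clamping `f` to `[-B, B]` keeps it close to `g` and makes the step function bounded
  set f' : ℝ → ℝ := fun x ↦ max (min (f x) B) (-B)
  have hf'supp : HasCompactSupport f' :=
    hfsupp.comp_left (g := fun y ↦ max (min y B) (-B)) (by simp [hB0])
  set η := min 1 (δ / (2 * (μ.real univ + 1)))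
  have hη : 0 < η := lt_min one_pos (by positivity)
  obtain ⟨a, c, n, ha, hfh⟩ := exists_stepFun_abs_sub_le (by fun_prop) hf'supp hη
  refine ⟨a, c, n, ha, fun x ↦ ?_, ?_⟩
  · have : |f' x| ≤ B := abs_le.2 ⟨le_max_right _ _, max_le (min_le_right _ _) (by linarith)⟩
    have hη1 : η ≤ 1 := min_le_left _ _
    linarith [abs_sub_abs_le_abs_sub (stepFun a c n x) (f' x), hfh x]
  calc ∫ x, |g x - stepFun a c n x| ∂μ ≤ ∫ x, (‖g x - f x‖ + η) ∂μ := by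
        refine integral_mono ((integrable_of_abs_le hg hB).sub
          (integrable_of_abs_le measurable_stepFun abs_stepFun_le)).abs
          (((integrable_of_abs_le hg hB).sub hfμ).norm.add (integrable_const η)) fun x ↦ ?_
        refine (abs_sub_le (g x) (f' x) _).trans (add_le_add ?_ ?_)
        · rw [Real.norm_eq_abs, abs_sub_comm, abs_sub_comm (g x)]
          exact abs_max_min_sub_le (hB x)
        · rw [abs_sub_comm]; exact hfh x
    _ = ∫ x, ‖g x - f x‖ ∂μ + η * μ.real univ := by
        rw [integral_add _ (integrable_const η), integral_const, smul_eq_mul, mul_comm]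
        exact ((integrable_of_abs_le hg hB).sub hfμ).norm
    _ ≤ δ / 2 + δ / 2 := by
        gcongr
        calc η * μ.real univ ≤ δ / (2 * (μ.real univ + 1)) * (μ.real univ + 1) := by
              gcongr
              · exact min_le_right _ _
              · linarith
          _ = δ / 2 := by field_simp
    _ = δ := add_halves δ

lemma exists_stepFun_lt_klDual (μ ν : Measure ℝ) [IsFiniteMeasure μ] [IsFiniteMeasure ν] {M : ℝ}
    (hM : ENNReal.ofReal M < InformationTheory.klDiv μ ν) :
    ∃ (a c : ℕ → ℝ) (n : ℕ), Monotone a ∧ M < klDual μ ν (stepFun a c n) := by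
  obtain ⟨g, B, hg, hgB, hMg⟩ := exists_lt_klDual_of_lt_klDiv hM
  set E := 1 + exp (B + 1)
  have hE : 0 < E := by positivity
  obtain ⟨a, c, n, ha, hhB, hgh⟩ := exists_stepFun_integral_abs_sub_le (μ + ν) hg hgB
    (div_pos (sub_pos.2 hMg) (by positivity : 0 < 2 * E))
  refine ⟨a, c, n, ha, ?_⟩
  set h := stepFun a c n
  have hint : Integrable (fun x ↦ |g x - h x|) (μ + ν) :=
    ((integrable_of_abs_le hg hgB).sub (integrable_of_abs_le measurable_stepFun hhB)).abs
  have hμ := integral_mono_measure (Measure.le_add_right le_rfl)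
    (ae_of_all _ fun x ↦ abs_nonneg (g x - h x)) hint
  have hν := integral_mono_measure (Measure.le_add_left le_rfl)
    (ae_of_all _ fun x ↦ abs_nonneg (g x - h x)) hint
  have hcost : ∫ x, |g x - h x| ∂μ + exp (B + 1) * ∫ x, |g x - h x| ∂ν ≤
      (klDual μ ν g - M) / 2 :=
    calc _ ≤ E * ∫ x, |g x - h x| ∂(μ + ν) := by
          linarith [mul_le_mul_of_nonneg_left hν (exp_pos (B + 1)).le]
      _ ≤ E * ((klDual μ ν g - M) / (2 * E)) := by gcongr
      _ = (klDual μ ν g - M) / 2 := by field_simp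
  linarith [klDual_le_klDual_add (μ := μ) (ν := ν) hg (fun x ↦ (hgB x).trans (by linarith))
    measurable_stepFun hhB]

lemma exists_pos_forall_dKS_le_ofReal_le_klDiv (P Q : Measure ℝ) [IsFiniteMeasure P]
    [IsFiniteMeasure Q] {M : ℝ} (hM : ENNReal.ofReal M < InformationTheory.klDiv P Q) :
    ∃ ε > 0, ∀ (P' : Measure ℝ) [IsFiniteMeasure P'], dKS P' P ≤ ε →
      ENNReal.ofReal M ≤ InformationTheory.klDiv P' Q := by
  obtain ⟨a, c, n, ha, hMh⟩ := exists_stepFun_lt_klDual P Q hM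
  set C := ∑ i ∈ Finset.range n, |c i|
  have hC : 0 ≤ C := Finset.sum_nonneg fun i _ ↦ abs_nonneg _
  set ε := (klDual P Q (stepFun a c n) - M) / (2 * C + 1)
  have hε : 0 < ε := div_pos (sub_pos.2 hMh) (by positivity)
  refine ⟨ε, hε, fun P' _ hP' ↦ ?_⟩
  have hshift : klDual P Q (stepFun a c n) - klDual P' Q (stepFun a c n) ≤ 2 * C * dKS P' P := by
    have := abs_integral_stepFun_sub_le (c := c) (n := n) ha P' P
    simp only [klDual]
    linarith [neg_abs_le (∫ x, stepFun a c n x ∂P' - ∫ x, stepFun a c n x ∂P)]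
  have hsmall : 2 * C * dKS P' P ≤ klDual P Q (stepFun a c n) - M :=
    calc 2 * C * dKS P' P ≤ 2 * C * ε := by gcongr
      _ ≤ (2 * C + 1) * ε := by linarith
      _ = _ := mul_div_cancel₀ _ (by positivity)
  calc ENNReal.ofReal M ≤ ENNReal.ofReal (klDual P' Q (stepFun a c n)) :=
        ENNReal.ofReal_le_ofReal (by linarith)
    _ ≤ _ := ofReal_klDual_le_klDiv measurable_stepFun abs_stepFun_le

theorem stmt_13_general
    (P Q : Measure ℝ) [IsProbabilityMeasure P] [IsProbabilityMeasure Q] :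
    (⨆ ε : {ε : ℝ // 0 < ε},
      ⨅ P' : {P' : Measure ℝ // IsProbabilityMeasure P' ∧ dKS P' P ≤ (ε : ℝ)},
        klDiv (P' : Measure ℝ) Q) = klDiv P Q := by
  refine le_antisymm (iSup_le fun ε ↦ iInf_le_of_le ⟨P, inferInstance, ?_⟩ le_rfl) ?_
  · exact (dKS_self P).trans_le ε.2.le
  refine le_of_forall_lt fun m hm ↦ ?_
  obtain ⟨M, -, hmM, hM⟩ := ENNReal.lt_iff_exists_real_btwn.1 hm
  rw [klDiv_eq_informationTheory_klDiv] at hM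
  obtain ⟨ε, hε, hKL⟩ := exists_pos_forall_dKS_le_ofReal_le_klDiv P Q hM
  refine hmM.trans_le (le_iSup_of_le ⟨ε, hε⟩ (le_iInf fun ⟨P', _, hP'⟩ ↦ ?_))
  rw [klDiv_eq_informationTheory_klDiv]
  exact hKL P' hP'

/-- for `P` absolutely continuous w.r.t. Lebesgue measure and any
probability measure `Q` on `ℝ`,
`sup_{ε>0} inf { KL(P',Q) : d_KS(P',P) ≤ ε } = KL(P,Q)`. -/
theorem stmt_13
    (P Q : Measure ℝ) [IsProbabilityMeasure P] [IsProbabilityMeasure Q]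
    (hP : P ≪ (volume : Measure ℝ)) :
    (⨆ ε : {ε : ℝ // 0 < ε},
      ⨅ P' : {P' : Measure ℝ // IsProbabilityMeasure P' ∧ dKS P' P ≤ (ε : ℝ)},
        klDiv (P' : Measure ℝ) Q) = klDiv P Q :=
  stmt_13_general P Q
end

section
/- Let X = {x₁,…,x_m}, let p be a pmf on X with p(x) > 0 for all x, and C_P = 1/min_x p(x) − 1. Let X₁, X₂, … be any sequence of points in X and define q₁ = (1/m,…,1/m) and q_t = Π_{Δ_m}( q_{t-1} + √(m/t) · e_{X_{t-1}}/(C_P p(X_{t-1})) ) for t ≥ 2. Let Q̂_n be the empirical distribution of X₁,…,X_n and let d_χ(Q̂_n, P) = Σ_x (n_x/n)·(n_x/(n p(x)) − 1), where n_x = Σ_{t=1}^n 1{X_t = x}, denote the chi-squared divergence of Q̂_n from P. Then there is a constant C < ∞, depending only on m and C_P, such that for every n, ( (1/n) Σ_{t=1}^n q_t(X_t)/p(X_t) − 1 )² ≥ d_χ(Q̂_n, P)² − C/√n. -/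
open Finset

/-- The probability simplex of pmfs on a finite type `𝒳`. -/
def simplex (𝒳 : Type*) [Fintype 𝒳] : Set (𝒳 → ℝ) :=
  {q | (∀ x, 0 ≤ q x) ∧ ∑ x, q x = 1}

/-- `z` is the Euclidean (ℓ²) projection of `v` onto the probability simplex. -/
def IsSimplexProj {𝒳 : Type*} [Fintype 𝒳] (v z : 𝒳 → ℝ) : Prop :=
  z ∈ simplex 𝒳 ∧ ∀ w ∈ simplex 𝒳, ∑ x, (z x - v x) ^ 2 ≤ ∑ x, (w x - v x) ^ 2

/-! The iterates are projected online gradient ascent on the simplex for the linear rewards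
`r_t(q) = q(X_t) / (C_P p(X_t))`, whose gradients have squared norm at most `1 / (C_P p_min)²`,
over a domain of squared diameter `2`. With the decreasing step sizes `√(m/(t+1))` the usual
telescoping regret bound against the fixed comparator `Q̂_n` is `O(√n)`. Since
`Σ_t Q̂_n(X_t)/p(X_t) = n Σ_x Q̂_n(x)²/p(x) = n (d_χ(Q̂_n, P) + 1)`, this says that the average of
`q_t(X_t)/p(X_t) − 1` is at least `d_χ(Q̂_n, P) − O(1/√n)`. Both quantities are at most `C_P` and
`d_χ ≥ 0`, so squaring costs only a factor `2 C_P`; if `C_P = 0` these bounds force `d_χ = 0`. -/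

open Filter Topology

lemma nonneg_of_forall_add_mul_nonneg {c K : ℝ} (h : ∀ s ∈ Set.Ioc (0 : ℝ) 1, 0 ≤ c + s * K) :
    0 ≤ c := by
  have hlim : Tendsto (fun s : ℝ => c + s * K) (𝓝[>] 0) (𝓝 c) := by
    refine ((by fun_prop : Continuous fun s : ℝ => c + s * K).tendsto' 0 c ?_).mono_left
      nhdsWithin_le_nhds
    simp
  exact ge_of_tendsto hlim (eventually_of_mem (Ioc_mem_nhdsGT one_pos) h)

lemma sum_Icc_one_div_sqrt_le (n : ℕ) :
    ∑ t ∈ Icc 1 n, 1 / √(t : ℝ) ≤ 2 * √(n : ℝ) := by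
  induction n with
  | zero => simp
  | succ n ih =>
    rw [sum_Icc_succ_top (by omega), Nat.cast_succ]
    have hpos : 0 < √((n : ℝ) + 1) := by positivity
    have hsq : √((n : ℝ) + 1) ^ 2 = n + 1 := Real.sq_sqrt (by positivity)
    have hsq' : √(n : ℝ) ^ 2 = n := Real.sq_sqrt (by positivity)
    have hmono : √(n : ℝ) ≤ √((n : ℝ) + 1) := Real.sqrt_le_sqrt (by linarith)
    have : 1 / √((n : ℝ) + 1) ≤ 2 * (√((n : ℝ) + 1) - √(n : ℝ)) := by
      rw [div_le_iff₀ hpos]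
      nlinarith [Real.sqrt_nonneg (n : ℝ)]
    linarith

lemma one_div_sqrt_div_succ_le {m n : ℝ} (hm : 1 ≤ m) (hn : 1 ≤ n) :
    1 / √(m / (n + 1)) ≤ 2 * √n := by
  rw [one_div, ← Real.sqrt_inv, inv_div, Real.sqrt_le_iff, mul_pow,
    Real.sq_sqrt (by positivity), div_le_iff₀ (by positivity)]
  exact ⟨by positivity, by nlinarith⟩

lemma sum_Icc_sqrt_div_succ_le (m n : ℕ) :
    ∑ t ∈ Icc 1 n, √((m : ℝ) / (t + 1)) ≤ √m * (2 * √n) :=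
  calc ∑ t ∈ Icc 1 n, √((m : ℝ) / (t + 1)) ≤ ∑ t ∈ Icc 1 n, √m * (1 / √t) :=
        sum_le_sum fun t ht => by
          have ht : (1 : ℝ) ≤ t := by exact_mod_cast (mem_Icc.1 ht).1
          rw [mul_one_div, ← Real.sqrt_div' _ (by positivity)]
          exact Real.sqrt_le_sqrt (div_le_div_of_nonneg_left (by positivity) (by positivity)
            (by linarith))
    _ ≤ √m * (2 * √n) := by rw [← mul_sum]; gcongr; exact sum_Icc_one_div_sqrt_le n

lemma sum_le_of_sq_dist_step {a r η : ℕ → ℝ} {D G : ℝ} (hη : ∀ t, 0 < η t)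
    (hη_anti : Antitone η) (haD : ∀ t, 1 ≤ t → a t ≤ D)
    (hstep : ∀ t, 1 ≤ t → a (t + 1) ≤ a t - 2 * η t * r t + η t ^ 2 * G) (n : ℕ) :
    ∑ t ∈ Icc 1 n, r t ≤ (D - a (n + 1)) / (2 * η n) + G / 2 * ∑ t ∈ Icc 1 n, η t := by
  induction n with
  | zero => simpa using div_nonneg (sub_nonneg.2 (haD 1 le_rfl)) (by linarith [hη 0])
  | succ n ih =>
    rw [sum_Icc_succ_top (by omega), sum_Icc_succ_top (by omega)]
    have hη' := hη (n + 1)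
    have hr :
        r (n + 1) ≤ (a (n + 1) - a (n + 1 + 1)) / (2 * η (n + 1)) + G / 2 * η (n + 1) := by
      rw [div_add' _ _ _ (by positivity), le_div_iff₀ (by positivity)]
      nlinarith [hstep (n + 1) (by omega)]
    have hdecr : (D - a (n + 1)) / (2 * η n) ≤ (D - a (n + 1)) / (2 * η (n + 1)) :=
      div_le_div_of_nonneg_left (sub_nonneg.2 (haD _ (by omega))) (by positivity)
        (by linarith [hη_anti (Nat.le_succ n)])
    have htel : (D - a (n + 1)) / (2 * η (n + 1)) + (a (n + 1) - a (n + 1 + 1)) / (2 * η (n + 1))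
        = (D - a (n + 1 + 1)) / (2 * η (n + 1)) := by rw [← add_div]; ring_nf
    linarith

lemma sq_sub_two_mul_le_sq {a b M ε : ℝ} (hb : 0 ≤ b) (haM : a ≤ M) (hbM : b ≤ M) (hε : 0 ≤ ε)
    (hba : b - a ≤ ε) : b ^ 2 - 2 * M * ε ≤ a ^ 2 := by
  rcases le_total 0 (b + a) with hab | hab
  · nlinarith [mul_le_mul_of_nonneg_right hba hab,
      mul_nonneg hε (by linarith : 0 ≤ 2 * M - (b + a))]
  · nlinarith [mul_nonneg hε (hb.trans hbM)]

section

variable {𝒳 : Type*} [Fintype 𝒳]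

lemma Convex.sum_sq_sub_le_of_isMinOn {S : Set (𝒳 → ℝ)} (hS : Convex ℝ S) {v z w : 𝒳 → ℝ}
    (hz : z ∈ S) (hmin : IsMinOn (fun u => ∑ x, (u x - v x) ^ 2) S z) (hw : w ∈ S) :
    ∑ x, (z x - w x) ^ 2 ≤ ∑ x, (v x - w x) ^ 2 := by
  set c := ∑ x, (z x - v x) * (w x - z x)
  set K := ∑ x, (w x - z x) ^ 2
  -- first-order optimality of `z`, seen along the segment from `z` to `w` as the step tends to 0
  have hc : 0 ≤ 2 * c := by
    refine nonneg_of_forall_add_mul_nonneg (K := K) fun s hs => ?_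
    have hmin_s : ∑ x, (z x - v x) ^ 2 ≤ ∑ x, ((z + s • (w - z)) x - v x) ^ 2 :=
      hmin (hS.add_smul_sub_mem hz hw (Set.Ioc_subset_Icc_self hs))
    have hexp : ∑ x, ((z + s • (w - z)) x - v x) ^ 2
        = ∑ x, (z x - v x) ^ 2 + s * (2 * c + s * K) := by
      simp only [Pi.add_apply, Pi.smul_apply, Pi.sub_apply, smul_eq_mul, c, K, mul_sum,
        ← sum_add_distrib]
      exact sum_congr rfl fun x _ => by ring
    rw [hexp] at hmin_s
    exact nonneg_of_mul_nonneg_right (by linarith) hs.1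
  have hexp : ∑ x, (v x - w x) ^ 2 = ∑ x, (z x - w x) ^ 2 + ∑ x, (z x - v x) ^ 2 + 2 * c := by
    simp only [c, mul_sum, ← sum_add_distrib]
    exact sum_congr rfl fun x _ => by ring
  have : 0 ≤ ∑ x, (z x - v x) ^ 2 := by positivity
  linarith

lemma uniform_mem_simplex [Nonempty 𝒳] : (fun _ => 1 / (Fintype.card 𝒳 : ℝ)) ∈ simplex 𝒳 :=
  ⟨fun _ => by positivity, by simp⟩

lemma iterates_mem_simplex {q v : ℕ → 𝒳 → ℝ} (hq₁ : q 1 ∈ simplex 𝒳)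
    (hproj : ∀ t, 2 ≤ t → IsSimplexProj (v t) (q t)) (t : ℕ) (ht : 1 ≤ t) : q t ∈ simplex 𝒳 := by
  obtain rfl | ht := ht.eq_or_lt
  exacts [hq₁, (hproj t ht).1]

lemma sum_sq_sub_le_two {a b : 𝒳 → ℝ} (ha : a ∈ simplex 𝒳) (hb : b ∈ simplex 𝒳) :
    ∑ x, (a x - b x) ^ 2 ≤ 2 := by
  calc ∑ x, (a x - b x) ^ 2 ≤ ∑ x, (a x + b x) := sum_le_sum fun x _ => by
        have ha' := mem_Icc_of_mem_stdSimplex ha x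
        have hb' := mem_Icc_of_mem_stdSimplex hb x
        nlinarith [ha'.1, ha'.2, hb'.1, hb'.2]
    _ = 2 := by rw [sum_add_distrib, ha.2, hb.2]; norm_num

lemma ogd_regret_le {q g : ℕ → 𝒳 → ℝ} {η : ℕ → ℝ} {G : ℝ} (hη : ∀ t, 0 < η t)
    (hη_anti : Antitone η) (hq : ∀ t, 1 ≤ t → q t ∈ simplex 𝒳)
    (hproj : ∀ t, 1 ≤ t → IsSimplexProj (fun x => q t x + η t * g t x) (q (t + 1)))
    (hg : ∀ t, ∑ x, g t x ^ 2 ≤ G) {w : 𝒳 → ℝ} (hw : w ∈ simplex 𝒳) (n : ℕ) :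
    ∑ t ∈ Icc 1 n, ∑ x, g t x * (w x - q t x) ≤ 1 / η n + G / 2 * ∑ t ∈ Icc 1 n, η t := by
  set a : ℕ → ℝ := fun t => ∑ x, (q t x - w x) ^ 2
  have hstep : ∀ t, 1 ≤ t →
      a (t + 1) ≤ a t - 2 * η t * ∑ x, g t x * (w x - q t x) + η t ^ 2 * G := by
    intro t ht
    have hnonexp := (convex_stdSimplex ℝ 𝒳).sum_sq_sub_le_of_isMinOn (hproj t ht).1
      (isMinOn_iff.2 (hproj t ht).2) hw
    have hexp : ∑ x, (q t x + η t * g t x - w x) ^ 2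
        = a t - 2 * η t * ∑ x, g t x * (w x - q t x) + η t ^ 2 * ∑ x, g t x ^ 2 := by
      simp only [a, mul_sum, ← sum_sub_distrib, ← sum_add_distrib]
      exact sum_congr rfl fun x _ => by ring
    have := mul_le_mul_of_nonneg_left (hg t) (sq_nonneg (η t))
    simp only [a] at hnonexp ⊢
    linarith
  have hreg := sum_le_of_sq_dist_step hη hη_anti (fun t ht => sum_sq_sub_le_two (hq t ht) hw)
    hstep n
  have ha : 0 ≤ a (n + 1) := by positivity
  have : (2 - a (n + 1)) / (2 * η n) ≤ 1 / η n := by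
    rw [div_le_div_iff₀ (by linarith [hη n]) (hη n)]
    nlinarith [hη n]
  linarith

lemma ogd_average_regret_le [DecidableEq 𝒳] {X : ℕ → 𝒳} {q : ℕ → 𝒳 → ℝ} {p : 𝒳 → ℝ}
    {pmin CP : ℝ} {m : ℕ} (hm : 1 ≤ m) (hpmin : 0 < pmin) (hp : ∀ x, pmin ≤ p x) (hCP : 0 < CP)
    (hq : ∀ t, 1 ≤ t → q t ∈ simplex 𝒳)
    (hproj : ∀ t : ℕ, 2 ≤ t → IsSimplexProj
      (fun x => q (t - 1) x + √((m : ℝ) / t) *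
        ((if x = X (t - 1) then (1 : ℝ) else 0) / (CP * p (X (t - 1))))) (q t))
    {w : 𝒳 → ℝ} (hw : w ∈ simplex 𝒳) {n : ℕ} (hn : 0 < n) :
    1 / n * ∑ t ∈ Icc 1 n, w (X t) / p (X t) - 1 / n * ∑ t ∈ Icc 1 n, q t (X t) / p (X t)
      ≤ CP * (2 + √m / (CP * pmin) ^ 2) / √n := by
  set η : ℕ → ℝ := fun t => √(m / (t + 1))
  set g : ℕ → 𝒳 → ℝ := fun t x => (if x = X t then 1 else 0) / (CP * p (X t))
  have hm' : (1 : ℝ) ≤ m := by exact_mod_cast hm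
  have hn' : (1 : ℝ) ≤ n := by exact_mod_cast hn
  have hη : ∀ t, 0 < η t := fun t => Real.sqrt_pos.2 (by positivity)
  have hη_anti : Antitone η := antitone_nat_of_succ_le fun t =>
    Real.sqrt_le_sqrt (div_le_div_of_nonneg_left (by positivity) (by positivity)
      (by push_cast; linarith))
  have hproj' : ∀ t, 1 ≤ t → IsSimplexProj (fun x => q t x + η t * g t x) (q (t + 1)) :=
    fun t _ => by simpa [η, g] using hproj (t + 1) (by omega)
  have hg : ∀ t, ∑ x, g t x ^ 2 ≤ 1 / (CP * pmin) ^ 2 := by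
    intro t
    simp only [g, div_pow, ite_pow, one_pow, zero_pow two_ne_zero, ← sum_div, sum_ite_eq',
      mem_univ, if_true]
    have := hp (X t)
    gcongr
  have hreward : ∀ t, ∑ x, g t x * (w x - q t x)
      = (w (X t) / p (X t) - q t (X t) / p (X t)) / CP := by
    intro t
    simp only [g, div_mul_eq_mul_div, ite_mul, one_mul, zero_mul, ← sum_div, sum_ite_eq',
      mem_univ, if_true]
    field_simp
  have hreg := ogd_regret_le hη hη_anti hq hproj' hg hw n
  simp only [hreward, ← sum_div, sum_sub_distrib] at hreg
  have hη_n : 1 / η n ≤ 2 * √n := one_div_sqrt_div_succ_le hm' hn'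
  have hη_sum : ∑ t ∈ Icc 1 n, η t ≤ √m * (2 * √n) := sum_Icc_sqrt_div_succ_le m n
  rw [div_le_iff₀ hCP] at hreg
  calc _ = (∑ t ∈ Icc 1 n, w (X t) / p (X t) - ∑ t ∈ Icc 1 n, q t (X t) / p (X t)) / n := by
        ring
    _ ≤ (1 / η n + 1 / (CP * pmin) ^ 2 / 2 * ∑ t ∈ Icc 1 n, η t) * CP / n := by gcongr
    _ ≤ (2 * √n + 1 / (CP * pmin) ^ 2 / 2 * (√m * (2 * √n))) * CP / n := by gcongr
    _ = CP * (2 + √m / (CP * pmin) ^ 2) * (√n / n) := by ring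
    _ = _ := by rw [Real.sqrt_div_self', mul_one_div]

lemma average_div_le {q : ℕ → 𝒳 → ℝ} {p : 𝒳 → ℝ} {pmin : ℝ}
    (hq : ∀ t, 1 ≤ t → q t ∈ simplex 𝒳) (hpmin : 0 < pmin) (hp : ∀ x, pmin ≤ p x) (X : ℕ → 𝒳)
    {n : ℕ} (hn : 0 < n) : 1 / n * ∑ t ∈ Icc 1 n, q t (X t) / p (X t) ≤ 1 / pmin := by
  have hsum : ∑ t ∈ Icc 1 n, q t (X t) / p (X t) ≤ n * (1 / pmin) := by
    simpa using sum_le_card_nsmul (Icc 1 n) _ (1 / pmin) fun t ht =>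
      div_le_div₀ zero_le_one (mem_Icc_of_mem_stdSimplex (hq t (mem_Icc.1 ht).1) _).2 hpmin
        (hp _)
  rw [one_div_mul_eq_div, div_le_iff₀ (by positivity)]
  linarith

noncomputable def chiSq (w p : 𝒳 → ℝ) : ℝ := ∑ x, w x * (w x / p x - 1)

lemma chiSq_eq_sum_mul_sq {w p : 𝒳 → ℝ} (hp : ∀ x, 0 < p x) (hwp : ∑ x, w x = ∑ x, p x) :
    chiSq w p = ∑ x, p x * (w x / p x - 1) ^ 2 := by
  have h : ∀ x, p x * (w x / p x - 1) ^ 2 = w x * (w x / p x - 1) + (p x - w x) := fun x => by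
    have := (hp x).ne'
    field_simp
    ring
  rw [chiSq, sum_congr rfl fun x _ => h x, sum_add_distrib, sum_sub_distrib, hwp, sub_self,
    add_zero]

lemma chiSq_nonneg {w p : 𝒳 → ℝ} (hp : ∀ x, 0 < p x) (hwp : ∑ x, w x = ∑ x, p x) :
    0 ≤ chiSq w p := by
  rw [chiSq_eq_sum_mul_sq hp hwp]
  exact sum_nonneg fun x _ => mul_nonneg (hp x).le (sq_nonneg _)

lemma chiSq_le {w p : 𝒳 → ℝ} {pmin : ℝ} (hw : w ∈ simplex 𝒳) (hpmin : 0 < pmin)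
    (hp : ∀ x, pmin ≤ p x) : chiSq w p ≤ 1 / pmin - 1 :=
  calc chiSq w p ≤ ∑ x, w x * (1 / pmin - 1) := sum_le_sum fun x _ => by
        have hx := mem_Icc_of_mem_stdSimplex hw x
        have := hp x
        gcongr
        · exact hx.1
        · exact hx.2
    _ = 1 / pmin - 1 := by rw [← sum_mul, hw.2, one_mul]

lemma sum_mul_div_eq_chiSq_add_one {w p : 𝒳 → ℝ} (hw : ∑ x, w x = 1) :
    ∑ x, w x * (w x / p x) = chiSq w p + 1 := by
  simp [chiSq, mul_sub, sum_sub_distrib, hw]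

section Empirical

variable [DecidableEq 𝒳]

noncomputable def empirical (X : ℕ → 𝒳) (n : ℕ) (x : 𝒳) : ℝ :=
  (∑ t ∈ Icc 1 n, if X t = x then (1 : ℝ) else 0) / n

lemma sum_comp_eq_mul_sum_empirical (X : ℕ → 𝒳) (n : ℕ) (f : 𝒳 → ℝ) :
    ∑ t ∈ Icc 1 n, f (X t) = n * ∑ x, empirical X n x * f x := by
  rcases n.eq_zero_or_pos with rfl | hn
  · simp
  simp only [empirical, div_mul_eq_mul_div, ← sum_div,
    mul_div_cancel₀ _ (by positivity : (n : ℝ) ≠ 0), sum_mul, ite_mul, one_mul, zero_mul]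
  rw [sum_comm]
  simp

lemma empirical_mem_simplex (X : ℕ → 𝒳) {n : ℕ} (hn : 0 < n) : empirical X n ∈ simplex 𝒳 := by
  refine ⟨fun x => div_nonneg (sum_nonneg fun t _ => by positivity) n.cast_nonneg, ?_⟩
  have h := sum_comp_eq_mul_sum_empirical X n fun _ => 1
  simp only [sum_const, Nat.card_Icc, add_tsub_cancel_right, nsmul_eq_mul, mul_one] at h
  exact (mul_eq_left₀ (by positivity)).1 h.symm

lemma chiSq_empirical (X : ℕ → 𝒳) (n : ℕ) (p : 𝒳 → ℝ) :
    chiSq (empirical X n) p = ∑ x, ((∑ t ∈ Icc 1 n, if X t = x then (1 : ℝ) else 0) / n) *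
      ((∑ t ∈ Icc 1 n, if X t = x then (1 : ℝ) else 0) / ((n : ℝ) * p x) - 1) := by
  simp only [chiSq, empirical, div_div]

lemma average_empirical_div_eq (X : ℕ → 𝒳) {n : ℕ} (hn : 0 < n) (p : 𝒳 → ℝ) :
    1 / n * ∑ t ∈ Icc 1 n, empirical X n (X t) / p (X t) = chiSq (empirical X n) p + 1 := by
  rw [sum_comp_eq_mul_sum_empirical X n fun x => empirical X n x / p x, ← mul_assoc,
    one_div_mul_cancel (by positivity), one_mul,
    sum_mul_div_eq_chiSq_add_one (empirical_mem_simplex X hn).2]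

end Empirical

end

/-- a deterministic guarantee for the projected online gradient
descent iterates: the squared average of `q_t(X_t)/p(X_t) − 1` is within
`C/√n` of the squared chi-squared divergence of the empirical distribution
from `P`, for a constant `C` depending only on `m` and `C_P`. -/
theorem stmt_17
    {𝒳 : Type*} [Fintype 𝒳] [Nonempty 𝒳] [DecidableEq 𝒳]
    (m : ℕ) (hm : m = Fintype.card 𝒳)
    (p : 𝒳 → ℝ) (hp_pos : ∀ x, 0 < p x) (hp_sum : ∑ x, p x = 1)
    (CP : ℝ) (hCP : CP = 1 / (Finset.univ.inf' Finset.univ_nonempty p) - 1) :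
    ∃ C : ℝ,
      ∀ (X : ℕ → 𝒳) (q : ℕ → 𝒳 → ℝ),
        (∀ x, q 1 x = 1 / (m : ℝ)) →
        (∀ t : ℕ, 2 ≤ t → IsSimplexProj
          (fun x => q (t - 1) x +
            Real.sqrt ((m : ℝ) / t) *
              ((if x = X (t - 1) then (1 : ℝ) else 0) / (CP * p (X (t - 1)))))
          (q t)) →
        ∀ n : ℕ,
          ((1 / (n : ℝ)) * (∑ t ∈ Finset.Icc 1 n, q t (X t) / p (X t)) - 1) ^ 2
            ≥ (∑ x : 𝒳,
                ((∑ t ∈ Finset.Icc 1 n, if X t = x then (1 : ℝ) else 0) / n) *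
                  ((∑ t ∈ Finset.Icc 1 n, if X t = x then (1 : ℝ) else 0) /
                    ((n : ℝ) * p x) - 1)) ^ 2
              - C / Real.sqrt n := by
  set pmin := univ.inf' univ_nonempty p
  have hpmin : 0 < pmin := (lt_inf'_iff _).2 fun x _ => hp_pos x
  have hp_ge : ∀ x, pmin ≤ p x := fun x => inf'_le _ (mem_univ x)
  have hCP_nonneg : 0 ≤ CP := by
    obtain ⟨x⟩ := ‹Nonempty 𝒳›
    rw [hCP, sub_nonneg, one_le_div hpmin]
    exact (hp_ge x).trans (hp_sum ▸ single_le_sum (fun y _ => (hp_pos y).le) (mem_univ x))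
  have hm1 : 1 ≤ m := hm ▸ Fintype.card_pos
  refine ⟨2 * CP * (CP * (2 + √m / (CP * pmin) ^ 2)), fun X q hq₁ hproj n => ?_⟩
  rcases n.eq_zero_or_pos with rfl | hn
  · simp
  have hq := iterates_mem_simplex (by rw [funext hq₁, hm]; exact uniform_mem_simplex) hproj
  have hw := empirical_mem_simplex X hn
  have hq_avg : 1 / n * ∑ t ∈ Icc 1 n, q t (X t) / p (X t) - 1 ≤ CP := by
    linarith [average_div_le hq hpmin hp_ge X hn]
  have hB_nonneg := chiSq_nonneg hp_pos (hw.2.trans hp_sum.symm)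
  have hB_le : chiSq (empirical X n) p ≤ CP := hCP ▸ chiSq_le hw hpmin hp_ge
  rw [ge_iff_le, ← chiSq_empirical, mul_div_assoc]
  rcases hCP_nonneg.eq_or_lt with hCP0 | hCP_pos
  · rw [le_antisymm (hCP0 ▸ hB_le) hB_nonneg, ← hCP0]
    simp [sq_nonneg]
  · have hregret := ogd_average_regret_le hm1 hpmin hp_ge hCP_pos hq hproj hw hn
    rw [average_empirical_div_eq X hn] at hregret
    exact sq_sub_two_mul_le_sq hB_nonneg hq_avg hB_le (by positivity) (by linarith)
end
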